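/- The staying probability P_stay(t) = erf(a/√(Dt)) + (1/a)·√(Dt/π)·[(1 − 2Dt/a²)·exp(−a²/(Dt)) + 2Dt/a² − 3] satisfies 0 ≤ P_stay(t) ≤ 1 for all t > 0, a > 0, D > 0. -/

import Mathlib

open Real

noncomputable def erf (x : ℝ) : ℝ := (2 / Real.sqrt π) * ∫ y in (0:ℝ)..x, Real.exp (-y^2)

noncomputable def Pstay (a D t : ℝ) : ℝ :=
  erf (a / Real.sqrt (D * t)) +
    (1 / a) * Real.sqrt (D * t / π) *
      ((1 - 2 * D * t / a^2) * Real.exp (-a^2 / (D * t)) + 2 * D * t / a^2 - 3)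

namespace Stmt4Aux

lemma hasDerivAt_expNeg (t : ℝ) : HasDerivAt (fun s => Real.exp (-s)) (-Real.exp (-t)) t := by
  exact ((Real.hasDerivAt_exp (-t)).comp t (hasDerivAt_neg t)).congr_deriv (by ring)

lemma aux_nonneg {f f' : ℝ → ℝ} (hd : ∀ t, HasDerivAt f (f' t) t) (h0 : 0 ≤ f 0)
    (hf' : ∀ t, 0 ≤ t → 0 ≤ f' t) {t : ℝ} (ht : 0 ≤ t) : 0 ≤ f t := by
  have hm : MonotoneOn f (Set.Ici 0) := by
    apply monotoneOn_of_deriv_nonneg (convex_Ici 0)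
    · exact fun x _ => (hd x).continuousAt.continuousWithinAt
    · exact fun x _ => (hd x).differentiableAt.differentiableWithinAt
    · intro x hx
      rw [(hd x).deriv]
      exact hf' x (le_of_lt (by simpa [interior_Ici] using hx))
  exact h0.trans (hm Set.self_mem_Ici ht ht)

lemma exp1 {t : ℝ} : 1 - t ≤ Real.exp (-t) := by
  have := Real.add_one_le_exp (-t); linarith

lemma exp2 {t : ℝ} (ht : 0 ≤ t) : Real.exp (-t) ≤ 1 - t + t^2/2 := by
  have h := aux_nonneg (f := fun t => 1 - t + t^2/2 - Real.exp (-t))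
    (f' := fun t => -1 + t + Real.exp (-t))
    (fun t => by
      have hD := (((hasDerivAt_const t (1:ℝ)).sub (hasDerivAt_id t)).add
          ((hasDerivAt_pow 2 t).div_const 2)).sub (hasDerivAt_expNeg t)
      refine hD.congr_deriv ?_
      push_cast; ring)
    (by norm_num)
    (fun t ht => by have := @exp1 t; linarith) ht
  linarith

lemma exp3 {t : ℝ} (ht : 0 ≤ t) : 1 - t + t^2/2 - t^3/6 ≤ Real.exp (-t) := by
  have h := aux_nonneg (f := fun t => Real.exp (-t) - (1 - t + t^2/2 - t^3/6))
    (f' := fun t => (1 - t + t^2/2) - Real.exp (-t))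
    (fun t => by
      have hD := (hasDerivAt_expNeg t).sub ((((hasDerivAt_const t (1:ℝ)).sub (hasDerivAt_id t)).add
          ((hasDerivAt_pow 2 t).div_const 2)).sub ((hasDerivAt_pow 3 t).div_const 6))
      refine hD.congr_deriv ?_
      push_cast; ring)
    (by norm_num)
    (fun t ht => by have := exp2 ht; linarith) ht
  linarith

lemma exp4 {t : ℝ} (ht : 0 ≤ t) : Real.exp (-t) ≤ 1 - t + t^2/2 - t^3/6 + t^4/24 := by
  have h := aux_nonneg (f := fun t => (1 - t + t^2/2 - t^3/6 + t^4/24) - Real.exp (-t))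
    (f' := fun t => Real.exp (-t) - (1 - t + t^2/2 - t^3/6))
    (fun t => by
      have hD := (((((hasDerivAt_const t (1:ℝ)).sub (hasDerivAt_id t)).add
          ((hasDerivAt_pow 2 t).div_const 2)).sub ((hasDerivAt_pow 3 t).div_const 6)).add
          ((hasDerivAt_pow 4 t).div_const 24)).sub (hasDerivAt_expNeg t)
      refine hD.congr_deriv ?_
      push_cast; ring)
    (by norm_num)
    (fun t ht => by have := exp3 ht; linarith) ht
  linarith

lemma exp5 {t : ℝ} (ht : 0 ≤ t) :
    1 - t + t^2/2 - t^3/6 + t^4/24 - t^5/120 ≤ Real.exp (-t) := by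
  have h := aux_nonneg (f := fun t => Real.exp (-t) - (1 - t + t^2/2 - t^3/6 + t^4/24 - t^5/120))
    (f' := fun t => (1 - t + t^2/2 - t^3/6 + t^4/24) - Real.exp (-t))
    (fun t => by
      have hD := (hasDerivAt_expNeg t).sub ((((((hasDerivAt_const t (1:ℝ)).sub
          (hasDerivAt_id t)).add
          ((hasDerivAt_pow 2 t).div_const 2)).sub ((hasDerivAt_pow 3 t).div_const 6)).add
          ((hasDerivAt_pow 4 t).div_const 24)).sub ((hasDerivAt_pow 5 t).div_const 120))
      refine hD.congr_deriv ?_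
      push_cast; ring)
    (by norm_num)
    (fun t ht => by have := exp4 ht; linarith) ht
  linarith

lemma cont_gauss : Continuous (fun y : ℝ => Real.exp (-y^2)) := by
  continuity

lemma hasDerivAt_Q (y : ℝ) :
    HasDerivAt (fun y : ℝ => y - y^3/3 + y^5/10 - y^7/42 + y^9/216 - y^11/1320)
      (1 - y^2 + y^4/2 - y^6/6 + y^8/24 - y^10/120) y := by
  have hD := (((((hasDerivAt_id y).sub ((hasDerivAt_pow 3 y).div_const 3)).add
      ((hasDerivAt_pow 5 y).div_const 10)).sub ((hasDerivAt_pow 7 y).div_const 42)).add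
      ((hasDerivAt_pow 9 y).div_const 216)).sub ((hasDerivAt_pow 11 y).div_const 1320)
  refine hD.congr_deriv ?_
  push_cast; ring

lemma integral_poly (u : ℝ) :
    (∫ y in (0:ℝ)..u, (1 - y^2 + y^4/2 - y^6/6 + y^8/24 - y^10/120))
      = u - u^3/3 + u^5/10 - u^7/42 + u^9/216 - u^11/1320 := by
  rw [intervalIntegral.integral_eq_sub_of_hasDerivAt (fun y _ => hasDerivAt_Q y)
    (by apply Continuous.intervalIntegrable; continuity)]
  norm_num

lemma integral_ge (u : ℝ) (hu : 0 ≤ u) :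
    u - u^3/3 + u^5/10 - u^7/42 + u^9/216 - u^11/1320 ≤ ∫ y in (0:ℝ)..u, Real.exp (-y^2) := by
  rw [← integral_poly u]
  apply intervalIntegral.integral_mono_on hu
  · apply Continuous.intervalIntegrable; continuity
  · exact cont_gauss.intervalIntegrable _ _
  · intro y _
    have h := exp5 (sq_nonneg y)
    calc 1 - y^2 + y^4/2 - y^6/6 + y^8/24 - y^10/120
        = 1 - y^2 + (y^2)^2/2 - (y^2)^3/6 + (y^2)^4/24 - (y^2)^5/120 := by ring
      _ ≤ Real.exp (-y^2) := h

lemma integral_le_gauss (u : ℝ) (hu : 0 ≤ u) :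
    (∫ y in (0:ℝ)..u, Real.exp (-y^2)) ≤ Real.sqrt π / 2 := by
  have h1 : (∫ y in (0:ℝ)..u, Real.exp (-y^2)) = ∫ y in Set.Ioc (0:ℝ) u, Real.exp (-y^2) := by
    rw [intervalIntegral.integral_of_le hu]
  rw [h1]
  have h2 : (∫ y in Set.Ioc (0:ℝ) u, Real.exp (-y^2))
      ≤ ∫ y in Set.Ioi (0:ℝ), Real.exp (-y^2) := by
    apply MeasureTheory.setIntegral_mono_set
    · have : MeasureTheory.IntegrableOn (fun y : ℝ => Real.exp (-1 * y^2)) (Set.Ioi 0) := by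
        exact (integrable_exp_neg_mul_sq one_pos).integrableOn
      simpa using this
    · filter_upwards with y using (Real.exp_pos _).le
    · exact HasSubset.Subset.eventuallyLE Set.Ioc_subset_Ioi_self
  have h3 : (∫ y in Set.Ioi (0:ℝ), Real.exp (-y^2)) = Real.sqrt π / 2 := by
    have := integral_gaussian_Ioi 1
    simpa using this
  linarith

lemma integral_ge_of_le {c u : ℝ} (hcu : c ≤ u) :
    (∫ y in (0:ℝ)..c, Real.exp (-y^2)) ≤ ∫ y in (0:ℝ)..u, Real.exp (-y^2) := by
  have hsplit := intervalIntegral.integral_add_adjacent_intervals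
    (μ := MeasureTheory.volume) (a := 0) (b := c) (c := u)
    (cont_gauss.intervalIntegrable _ _) (cont_gauss.intervalIntegrable _ _)
  have hnn : 0 ≤ ∫ y in c..u, Real.exp (-y^2) :=
    intervalIntegral.integral_nonneg hcu (fun y _ => (Real.exp_pos _).le)
  linarith

lemma polyA {u : ℝ} (h2 : u^2 ≤ 2) :
    0 ≤ u^6/6 - u^8/20 - u^10/168 + u^12/108 - u^14/660 := by
  nlinarith [sq_nonneg u, pow_two_nonneg (u^3), sq_nonneg (u^2), sq_nonneg (u^4),
    mul_nonneg (mul_nonneg (sq_nonneg (u^3)) (sq_nonneg u)) (sub_nonneg.2 h2),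
    mul_nonneg (mul_nonneg (mul_nonneg (sq_nonneg (u^3)) (sq_nonneg u)) (sq_nonneg u)) (sub_nonneg.2 h2),
    mul_nonneg (sq_nonneg (u^3)) (sub_nonneg.2 h2),
    mul_nonneg (mul_nonneg (sq_nonneg (u^3)) (sub_nonneg.2 h2)) (sub_nonneg.2 h2)]

lemma key_lower (u : ℝ) (hu : 0 < u) :
    3 - 2/u^2 - (1 - 2/u^2) * Real.exp (-u^2) ≤ 2*u*∫ y in (0:ℝ)..u, Real.exp (-y^2) := by
  set I := ∫ y in (0:ℝ)..u, Real.exp (-y^2) with hI_def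
  set E := Real.exp (-u^2) with hE_def
  have hu2 : (0:ℝ) < u^2 := by positivity
  have hEpos : 0 < E := Real.exp_pos _
  have hA := integral_ge u hu.le
  rcases le_or_gt (u^2) 2 with hx | hx
  · have key : 3*u^2 - 2 - (u^2-2)*E ≤ (2*u*I)*u^2 := by
      have hB := exp4 (t := u^2) (sq_nonneg u)
      have h5 : 2*u^4 - 2*u^6/3 + u^8/5 - u^10/21 + u^12/108 - u^14/660 ≤ (2*u*I)*u^2 := by
        nlinarith [mul_le_mul_of_nonneg_left hA (by positivity : (0:ℝ) ≤ 2*u^3)]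
      have h6 : (2-u^2)*E ≤ 2 - 3*u^2 + 2*u^4 - 5*u^6/6 + u^8/4 - u^10/24 := by
        nlinarith [mul_le_mul_of_nonneg_left hB (by linarith : (0:ℝ) ≤ 2 - u^2)]
      have hP := polyA hx
      linarith
    have hmul : (3 - 2/u^2 - (1 - 2/u^2) * E) * u^2 ≤ (2*u*I) * u^2 := by
      calc (3 - 2/u^2 - (1 - 2/u^2) * E) * u^2 = 3*u^2 - 2 - (u^2-2)*E := by
            field_simp
        _ ≤ (2*u*I)*u^2 := key
    exact le_of_mul_le_mul_right hmul hu2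
  · have hc : (1.414:ℝ) ≤ u := by nlinarith
    have hIc : (0.838:ℝ) ≤ I := by
      have h1 := integral_ge (1.414) (by norm_num)
      have h2 := integral_ge_of_le (c := 1.414) (u := u) hc
      have : (0.838:ℝ) ≤ 1.414 - 1.414^3/3 + 1.414^5/10 - 1.414^7/42 + 1.414^9/216 - 1.414^11/1320 := by
        norm_num
      linarith
    have hnn : 0 ≤ (1 - 2/u^2) * E := by
      apply mul_nonneg _ hEpos.le
      rw [sub_nonneg, div_le_one hu2]; linarith
    have key2 : 3 - 2/u^2 ≤ 2*u*I := by
      rw [← sub_nonneg]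
      have : 2*u*I - (3 - 2/u^2) = (2*u^3*I - 3*u^2 + 2)/u^2 := by field_simp; ring
      rw [this]
      apply div_nonneg _ hu2.le
      nlinarith [mul_le_mul_of_nonneg_left hIc (by positivity : (0:ℝ) ≤ 2*u^3),
        mul_nonneg (mul_nonneg (sub_nonneg.2 hc) (sub_nonneg.2 hc)) (sub_nonneg.2 hc),
        mul_nonneg (sub_nonneg.2 hc) (sub_nonneg.2 hc), sub_nonneg.2 hc]
    linarith

lemma key (u : ℝ) (hu : 0 < u) :
    0 ≤ erf u + 1/(Real.sqrt π * u) * ((1 - 2/u^2) * Real.exp (-u^2) + 2/u^2 - 3) ∧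
    erf u + 1/(Real.sqrt π * u) * ((1 - 2/u^2) * Real.exp (-u^2) + 2/u^2 - 3) ≤ 1 := by
  have hπ : (0:ℝ) < Real.sqrt π := Real.sqrt_pos.2 Real.pi_pos
  have hu2 : (0:ℝ) < u^2 := by positivity
  set I := ∫ y in (0:ℝ)..u, Real.exp (-y^2) with hI_def
  set E := Real.exp (-u^2) with hE_def
  have herf : erf u = 2/Real.sqrt π * I := rfl
  constructor
  · have hsum : 0 ≤ 2*u*I + ((1 - 2/u^2) * E + 2/u^2 - 3) := by
      have := key_lower u hu
      rw [← hI_def, ← hE_def] at this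
      linarith
    have heq : erf u + 1/(Real.sqrt π * u) * ((1 - 2/u^2) * E + 2/u^2 - 3)
        = (2*u*I + ((1 - 2/u^2) * E + 2/u^2 - 3))/(Real.sqrt π * u) := by
      rw [herf]; field_simp
    rw [heq]
    exact div_nonneg hsum (by positivity)
  · have hE1 : E ≤ 1 := by
      rw [hE_def]
      calc Real.exp (-u^2) ≤ Real.exp 0 := Real.exp_le_exp.2 (by nlinarith [sq_nonneg u])
        _ = 1 := Real.exp_zero
    have hExp1 : 1 - u^2 ≤ E := exp1
    have hBle : (1 - 2/u^2) * E + 2/u^2 - 3 ≤ 0 := by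
      have hfe : (1 - 2/u^2) * E + 2/u^2 - 3 = ((u^2-2)*E + 2 - 3*u^2)/u^2 := by
        field_simp
      rw [hfe]
      apply div_nonpos_of_nonpos_of_nonneg _ hu2.le
      nlinarith [mul_nonneg hu2.le (sub_nonneg.2 hE1), hExp1]
    have herf1 : erf u ≤ 1 := by
      rw [herf]
      have hIg : I ≤ Real.sqrt π / 2 := by
        rw [hI_def]; exact integral_le_gauss u hu.le
      calc 2/Real.sqrt π * I ≤ 2/Real.sqrt π * (Real.sqrt π/2) :=
            mul_le_mul_of_nonneg_left hIg (by positivity)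
        _ = 1 := by field_simp
    have hterm : 1/(Real.sqrt π * u) * ((1 - 2/u^2) * E + 2/u^2 - 3) ≤ 0 :=
      mul_nonpos_of_nonneg_of_nonpos (by positivity) hBle
    linarith

end Stmt4Aux

theorem stmt_4 (a D t : ℝ) (ha : 0 < a) (hD : 0 < D) (ht : 0 < t) :
    0 ≤ Pstay a D t ∧ Pstay a D t ≤ 1 := by
  have hDt : 0 < D*t := mul_pos hD ht
  have hs : 0 < Real.sqrt (D*t) := Real.sqrt_pos.2 hDt
  have hs2 : Real.sqrt (D*t)^2 = D*t := Real.sq_sqrt hDt.le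
  set u := a / Real.sqrt (D*t) with hu_def
  have hu : 0 < u := div_pos ha hs
  have e1 : -a^2/(D*t) = -u^2 := by
    rw [hu_def, div_pow, hs2]; ring
  have e2 : 2*D*t/a^2 = 2/u^2 := by
    rw [hu_def, div_pow, hs2]
    field_simp
  have e3 : (1/a) * Real.sqrt (D*t/π) = 1/(Real.sqrt π * u) := by
    rw [Real.sqrt_div hDt.le, hu_def]
    field_simp
  have hP : Pstay a D t = erf u
      + 1/(Real.sqrt π*u)*((1-2/u^2)*Real.exp (-u^2)+2/u^2-3) := by
    simp only [Pstay]
    rw [← hu_def] -- may be a no-op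
    rw [e1, e2, e3]
  rw [hP]
  exact Stmt4Aux.key u hu
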